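/- Let m ≥ 1, let t be an integer with 1 ≤ t ≤ m-1 such that m/gcd(m,t) is odd, and let γ : 𝔽₂^m → 𝔽₂ be any Boolean function. Define f₀ on 𝔽₂^m × 𝔽₂^m by f₀(a,y) = Σ_{i=0}^{m-1} (a_i·a_{i+t} + a_{i+t} + a_{i+m-t})·y_i + γ(1+a₀, 1+a₁, …, 1+a_{m-1}) + Σ_{i=m-t}^{m-1} a_i·a_{i+t}, with indices taken modulo m. Then f₀ is a bent function on 𝔽₂^{2m}. -/

import Mathlib

/-!
`f₀(a, y) = π(a) · y + g(a)` is of Maiorana–McFarland type, with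
`π(a)ᵢ = aᵢ a_{i+t} + a_{i+t} + a_{i-t}`; summing the Walsh transform over `y` first leaves the
single term `a = π⁻¹(b₂)`, so `f₀` is bent as soon as `π` is a permutation of `𝔽₂^m`.

To see that `π` is injective, let `π(a) = π(c)`. The equations at `i` and `i - t` give
`(a + c)_{i-2t} = cᵢ (1 + cᵢ) (a + c)_{i+t} = 0` whenever `aᵢ = cᵢ`, so agreement spreads along
steps of `-2t`, hence along the whole orbit `i + ℕ t`, whose length `m / gcd(m, t)` is odd.
If instead `a` and `c` differ on an entire orbit, the equations force `c` to alternate along it,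
which is impossible on a cycle of odd length.
-/

open Finset Function

/-- The Walsh transform of a Boolean function on `𝔽₂^m × 𝔽₂^m` (identified with `𝔽₂^{2m}`):
`W_f(b) = Σ_{x} (-1)^{f(x) + Σᵢ x.1ᵢ b.1ᵢ + Σᵢ x.2ᵢ b.2ᵢ}`, exponent lifted to `{0,1} ⊆ ℤ`. -/
def walshTransform2 {m : ℕ} [NeZero m]
    (f : (ZMod m → ZMod 2) × (ZMod m → ZMod 2) → ZMod 2)
    (b : (ZMod m → ZMod 2) × (ZMod m → ZMod 2)) : ℤ :=
  ∑ x : (ZMod m → ZMod 2) × (ZMod m → ZMod 2),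
    (-1 : ℤ) ^ (f x + ∑ i : ZMod m, x.1 i * b.1 i + ∑ i : ZMod m, x.2 i * b.2 i).val

def IsBent2 {m : ℕ} [NeZero m]
    (f : (ZMod m → ZMod 2) × (ZMod m → ZMod 2) → ZMod 2) : Prop :=
  ∀ b, walshTransform2 f b = 2 ^ m ∨ walshTransform2 f b = -(2 ^ m)
lemma neg_one_pow_val_add (u v : ZMod 2) :
    (-1 : ℤ) ^ (u + v).val = (-1) ^ u.val * (-1) ^ v.val := by
  revert u v; decide

lemma neg_one_pow_val_sum {ι : Type*} (s : Finset ι) (x : ι → ZMod 2) :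
    (-1 : ℤ) ^ (∑ i ∈ s, x i).val = ∏ i ∈ s, (-1) ^ (x i).val := by
  classical
  induction s using Finset.induction_on with
  | empty => simp
  | insert j s hj ih => rw [sum_insert hj, prod_insert hj, neg_one_pow_val_add, ih]

lemma sum_neg_one_pow_val_mul (c : ZMod 2) :
    ∑ x : ZMod 2, (-1 : ℤ) ^ (c * x).val = if c = 0 then 2 else 0 := by
  revert c; decide

lemma sum_neg_one_pow_val_dotProduct {ι : Type*} [Fintype ι] [DecidableEq ι]
    (c : ι → ZMod 2) :
    ∑ y : ι → ZMod 2, (-1 : ℤ) ^ (∑ i, c i * y i).val =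
      if c = 0 then 2 ^ Fintype.card ι else 0 := by
  simp only [neg_one_pow_val_sum]
  rw [← Fintype.prod_sum fun i x => (-1 : ℤ) ^ (c i * x).val]
  simp_rw [sum_neg_one_pow_val_mul, Fintype.prod_ite_zero,
    prod_const, card_univ, funext_iff, Pi.zero_apply]

section MaioranaMcFarland

variable {m : ℕ} [NeZero m] {π : (ZMod m → ZMod 2) → ZMod m → ZMod 2}
  {g : (ZMod m → ZMod 2) → ZMod 2} {f : (ZMod m → ZMod 2) × (ZMod m → ZMod 2) → ZMod 2}

lemma walshTransform2_eq_sum_ite (hf : ∀ a y, f (a, y) = ∑ i, π a i * y i + g a)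
    (b : (ZMod m → ZMod 2) × (ZMod m → ZMod 2)) :
    walshTransform2 f b = ∑ a, (-1 : ℤ) ^ (g a + ∑ i, a i * b.1 i).val *
      if π a = b.2 then 2 ^ m else 0 := by
  rw [walshTransform2, Fintype.sum_prod_type]
  refine sum_congr rfl fun a _ => ?_
  have hexp : ∀ y, f (a, y) + ∑ i, a i * b.1 i + ∑ i, y i * b.2 i =
      (g a + ∑ i, a i * b.1 i) + ∑ i, (π a + b.2) i * y i := by
    intro y
    simp only [hf, Pi.add_apply, add_mul, sum_add_distrib, mul_comm (y _)]
    ring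
  simp only [hexp, neg_one_pow_val_add (g a + _)]
  rw [← mul_sum, sum_neg_one_pow_val_dotProduct, ZMod.card]
  simp only [CharTwo.add_eq_zero]

theorem isBent2_of_bijective (hπ : Bijective π) (hf : ∀ a y, f (a, y) = ∑ i, π a i * y i + g a) :
    IsBent2 f := by
  intro b
  obtain ⟨a₀, ha₀⟩ := hπ.2 b.2
  have hW : walshTransform2 f b = (-1) ^ (g a₀ + ∑ i, a₀ i * b.1 i).val * 2 ^ m := by
    rw [walshTransform2_eq_sum_ite hf, sum_eq_single a₀ _ (by simp), if_pos ha₀]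
    intro a _ ha
    rw [if_neg fun h => ha (hπ.1 (h.trans ha₀.symm)), mul_zero]
  rcases neg_one_pow_eq_or ℤ (g a₀ + ∑ i, a₀ i * b.1 i).val with h | h <;>
    simp [hW, h]

end MaioranaMcFarland

def quadShift {G : Type*} [AddCommGroup G] (t : G) (a : G → ZMod 2) : G → ZMod 2 :=
  fun i => a i * a (i + t) + a (i + t) + a (i - t)

namespace quadShift

variable {G : Type*} [AddCommGroup G] {t : G} {a c : G → ZMod 2}

lemma apply_sub_sub_eq (h : quadShift t a = quadShift t c) {i : G} (hi : a i = c i) :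
    a (i - t - t) = c (i - t - t) := by
  have h₀ := congrFun h i
  have h₁ := congrFun h (i - t)
  simp only [quadShift, sub_add_cancel] at h₀ h₁
  rw [hi] at h₀ h₁
  revert h₀ h₁
  generalize a (i - t - t) = x₀, a (i - t) = x₁, a (i + t) = x₃,
    c (i - t - t) = y₀, c (i - t) = y₁, c i = y₂, c (i + t) = y₃
  revert x₀ x₁ x₃ y₀ y₁ y₂ y₃
  decide

lemma apply_sub_eq (h : quadShift t a = quadShift t c) (ht : Odd (addOrderOf t)) {i : G}
    (hi : a i = c i) : a (i - t) = c (i - t) := by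
  have hsub : ∀ n : ℕ, a (i - n • (t + t)) = c (i - n • (t + t)) := by
    intro n
    induction n with
    | zero => simpa using hi
    | succ n ih =>
      rw [succ_nsmul, ← sub_sub, ← sub_sub]
      exact apply_sub_sub_eq h ih
  obtain ⟨k, hk⟩ := ht
  have hkt : (k + 1) • (t + t) = t := by
    rw [← two_nsmul, smul_smul, show (k + 1) * 2 = addOrderOf t + 1 by omega, succ_nsmul,
      addOrderOf_nsmul_eq_zero, zero_add]
  simpa [hkt] using hsub (k + 1)

lemma apply_eq_of_apply_add_nsmul_eq (h : quadShift t a = quadShift t c)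
    (ht : Odd (addOrderOf t)) {i : G} {n : ℕ} (hn : a (i + n • t) = c (i + n • t)) :
    a i = c i := by
  induction n generalizing i with
  | zero => simpa using hn
  | succ n ih => exact ih (by simpa [succ_nsmul, ← add_assoc] using apply_sub_eq h ht hn)

lemma apply_add_add_eq_add_one (h : quadShift t a = quadShift t c) {j : G}
    (h₀ : a j ≠ c j) (h₁ : a (j + t) ≠ c (j + t)) (h₂ : a (j + t + t) ≠ c (j + t + t)) :
    c (j + t + t) = c (j + t) + 1 := by
  have h' := congrFun h (j + t)
  simp only [quadShift, add_sub_cancel_right] at h'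
  revert h₀ h₁ h₂ h'
  generalize a j = x₀, a (j + t) = x₁, a (j + t + t) = x₂,
    c j = y₀, c (j + t) = y₁, c (j + t + t) = y₂
  revert x₀ x₁ x₂ y₀ y₁ y₂
  decide

lemma exists_apply_add_nsmul_eq (h : quadShift t a = quadShift t c) (ht : Odd (addOrderOf t))
    (i : G) : ∃ n : ℕ, a (i + n • t) = c (i + n • t) := by
  by_contra! hne
  have hp : ∀ n : ℕ, i + (n + 1) • t = i + n • t + t := fun n => by rw [succ_nsmul, add_assoc]
  have hc : ∀ n : ℕ, c (i + (n + 1) • t) = c (i + t) + n := by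
    intro n
    induction n with
    | zero => simp
    | succ n ih =>
      have := apply_add_add_eq_add_one h (hne n) (by rw [← hp]; exact hne _)
        (by rw [← hp, ← hp]; exact hne _)
      rw [← hp, ← hp] at this
      rw [this, ih]
      push_cast
      ring
  have := hc (addOrderOf t)
  rw [succ_nsmul, addOrderOf_nsmul_eq_zero, zero_add, ZMod.natCast_eq_one_iff_odd.mpr ht]
    at this
  simp at this

theorem injective (ht : Odd (addOrderOf t)) : Injective (quadShift t) := fun _ _ h =>
  funext fun i =>
    let ⟨_, hn⟩ := exists_apply_add_nsmul_eq h ht i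
    apply_eq_of_apply_add_nsmul_eq h ht hn

end quadShift

theorem statement13_general (m t : ℕ) [NeZero m]
    (hodd : Odd (m / Nat.gcd m t))
    (γ : (ZMod m → ZMod 2) → ZMod 2)
    (f : (ZMod m → ZMod 2) × (ZMod m → ZMod 2) → ZMod 2)
    (hf : ∀ (a y : ZMod m → ZMod 2),
      f (a, y) = ∑ i : ZMod m, (a i * a (i + t) + a (i + t) + a (i + m - t)) * y i +
        γ (fun j => 1 + a j) +
        ∑ i ∈ Finset.Ico (m - t) m, a i * a (i + t)) :
    IsBent2 f := by
  have ht : Odd (addOrderOf (t : ZMod m)) := by rwa [ZMod.addOrderOf_coe t (NeZero.ne m)]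
  refine isBent2_of_bijective (quadShift.injective ht).bijective_of_finite
    (g := fun a => γ (fun j => 1 + a j) + ∑ i ∈ Ico (m - t) m, a i * a (i + t)) fun a y => ?_
  simp only [hf, quadShift, ZMod.natCast_self, add_zero]
  ring

/-- with `m ≥ 1`, `1 ≤ t ≤ m-1` such that `m / gcd(m,t)` is odd, and any
Boolean function `γ` on `𝔽₂^m`, the function
`f₀(a,y) = Σ_{i=0}^{m-1} (aᵢ·a_{i+t} + a_{i+t} + a_{i+m-t})·yᵢ + γ(1+a₀,…,1+a_{m-1})
           + Σ_{i=m-t}^{m-1} aᵢ·a_{i+t}` (indices modulo `m`) is bent on `𝔽₂^{2m}`. -/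
theorem statement13 (m t : ℕ) (hm : 1 ≤ m) [NeZero m]
    (ht1 : 1 ≤ t) (ht2 : t ≤ m - 1) (hodd : Odd (m / Nat.gcd m t))
    (γ : (ZMod m → ZMod 2) → ZMod 2)
    (f : (ZMod m → ZMod 2) × (ZMod m → ZMod 2) → ZMod 2)
    (hf : ∀ (a y : ZMod m → ZMod 2),
      f (a, y) = ∑ i : ZMod m, (a i * a (i + t) + a (i + t) + a (i + m - t)) * y i +
        γ (fun j => 1 + a j) +
        ∑ i ∈ Finset.Ico (m - t) m, a i * a (i + t)) :
    IsBent2 f :=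
  statement13_general m t hodd γ f hf
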